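/- arXiv:2112.05618 — 3 statements merged into one kernel-verified Lean document; each statement's English description precedes it below -/
import Mathlib

section
/- Let Q(x_1,...,x_m) = Σ_{I ⊆ {1,...,m}, #I = k} δ_I · Π_{i∈I} x_i be a multilinear homogeneous polynomial of degree k ≤ m over the finite field F_q, with not all coefficients δ_I zero. If Z ⊆ F_q^m is the set of zeros of Q, then #Z ≤ q^{m-k}·(q^k − (q−1)^k). -/
/-!
Pick `I` with `#I = k` and `δ I ≠ 0`. Fixing the coordinates outside `I` turns `Q` into a
multilinear polynomial in the variables of `I` whose coefficient of `∏ i ∈ I, x i` is still `δ I`,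
because no other `k`-set contains `I`. A multilinear polynomial in `n` variables with nonzero top
coefficient has at least `(q - 1) ^ n` nonzeros: write it as `x a * A + B` with `A, B` free of `x a`
and `A` of nonzero top coefficient; each nonzero of `A` extends along `x a` in exactly `q - 1` ways
to a nonzero. Summing over the `q ^ (m - k)` choices of the outer coordinates leaves at most
`q ^ (m - k) * (q ^ k - (q - 1) ^ k)` zeros.
-/

open Finset

section

variable {F ι : Type*} [Field F] [DecidableEq ι]

def multilinearOn (s : Finset ι) (c : Finset ι → F) (y : ι → F) : F :=
  ∑ I ∈ s.powerset, c I * ∏ i ∈ I, y i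

theorem multilinearOn_insert {a : ι} {s : Finset ι} (ha : a ∉ s) (c : Finset ι → F) (y : ι → F) :
    multilinearOn (insert a s) c y =
      y a * multilinearOn s (fun J ↦ c (insert a J)) y + multilinearOn s c y := by
  rw [multilinearOn, sum_powerset_insert ha, add_comm, multilinearOn, multilinearOn, mul_sum]
  congr 1
  refine sum_congr rfl fun J hJ ↦ ?_
  rw [prod_insert fun haJ ↦ ha (mem_powerset.mp hJ haJ)]
  ring

theorem multilinearOn_update_of_notMem {a : ι} {s : Finset ι} (ha : a ∉ s) (c : Finset ι → F)
    (y : ι → F) (t : F) : multilinearOn s c (Function.update y a t) = multilinearOn s c y := by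
  refine sum_congr rfl fun J hJ ↦ congrArg _ (prod_congr rfl fun i hi ↦ ?_)
  exact Function.update_of_ne (by rintro rfl; exact ha (mem_powerset.mp hJ hi)) _ _

def restrictCoeff (S : Finset (Finset ι)) (δ : Finset ι → F) (s : Finset ι) (z : ι → F)
    (I : Finset ι) : F :=
  ∑ K ∈ S with K ∩ s = I, δ K * ∏ i ∈ K \ s, z i

theorem sum_prod_eq_multilinearOn_restrictCoeff (S : Finset (Finset ι)) (δ : Finset ι → F)
    (s : Finset ι) {z y : ι → F} (hyz : ∀ i ∉ s, y i = z i) :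
    ∑ K ∈ S, δ K * ∏ i ∈ K, y i = multilinearOn s (restrictCoeff S δ s z) y := by
  rw [← sum_fiberwise_of_maps_to (g := (· ∩ s)) (t := s.powerset)
    fun K _ ↦ mem_powerset.mpr inter_subset_right]
  refine sum_congr rfl fun I _ ↦ ?_
  rw [restrictCoeff, sum_mul]
  refine sum_congr rfl fun K hK ↦ ?_
  have hKs : K ∩ s = I := (mem_filter.mp hK).2
  have hoff : ∏ i ∈ K \ s, y i = ∏ i ∈ K \ s, z i :=
    prod_congr rfl fun i hi ↦ hyz i (mem_sdiff.mp hi).2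
  rw [← prod_inter_mul_prod_sdiff K s, hoff, hKs]
  ring

theorem restrictCoeff_self {S : Finset (Finset ι)} (δ : Finset ι → F) {s : Finset ι} (hs : s ∈ S)
    (hmax : ∀ K ∈ S, s ⊆ K → K = s) (z : ι → F) : restrictCoeff S δ s z s = δ s := by
  have : ({K ∈ S | s ⊆ K} : Finset _) = {s} := by
    ext K
    simp only [mem_filter, mem_singleton]
    exact ⟨fun h ↦ hmax K h.1 h.2, by rintro rfl; exact ⟨hs, subset_rfl⟩⟩
  simp [restrictCoeff, this]

end

section

variable {ι β : Type*} [Fintype ι] [DecidableEq ι] [Fintype β]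

theorem card_piFinset_ite_singleton_univ (s : Finset ι) (b : β) :
    #(Fintype.piFinset fun i ↦ if i ∈ s then ({b} : Finset β) else univ) =
      Fintype.card β ^ (Fintype.card ι - #s) := by
  simp [apply_ite card, prod_ite, filter_not, card_univ_sdiff]

variable [DecidableEq β]

def coordSlice (s : Finset ι) (z : ι → β) : Finset (ι → β) := {y | ∀ i ∉ s, y i = z i}

@[simp]
theorem mem_coordSlice {s : Finset ι} {z y : ι → β} : y ∈ coordSlice s z ↔ ∀ i ∉ s, y i = z i := by
  simp [coordSlice]

theorem update_mem_coordSlice_insert {s : Finset ι} {z y : ι → β} (hy : y ∈ coordSlice s z)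
    (a : ι) (t : β) : Function.update y a t ∈ coordSlice (insert a s) z := by
  rw [mem_coordSlice] at hy ⊢
  intro i hi
  rw [mem_insert, not_or] at hi
  rw [Function.update_of_ne hi.1, hy i hi.2]

theorem eq_and_eq_of_update_eq_of_mem_coordSlice {s : Finset ι} {a : ι} (ha : a ∉ s)
    {z y₁ y₂ : ι → β} (hy₁ : y₁ ∈ coordSlice s z) (hy₂ : y₂ ∈ coordSlice s z) {t₁ t₂ : β}
    (h : Function.update y₁ a t₁ = Function.update y₂ a t₂) : y₁ = y₂ ∧ t₁ = t₂ := by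
  rw [mem_coordSlice] at hy₁ hy₂
  refine ⟨funext fun i ↦ ?_, by simpa using congrFun h a⟩
  by_cases hia : i = a
  · rw [hia, hy₁ a ha, hy₂ a ha]
  · simpa [hia] using congrFun h i

end

section

variable {F ι : Type*} [Field F] [Fintype F] [DecidableEq F]

theorem card_filter_mul_add_ne_zero {a : F} (ha : a ≠ 0) (b : F) :
    #{t : F | t * a + b ≠ 0} = Fintype.card F - 1 := by
  have : ({t : F | t * a + b ≠ 0} : Finset F) = univ.erase (-b / a) := by
    ext t
    simp [eq_div_iff ha, add_eq_zero_iff_eq_neg]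
  rw [this, card_erase_of_mem (mem_univ _), card_univ]

variable [Fintype ι] [DecidableEq ι]

theorem pow_card_sub_one_le_card_coordSlice_ne_zero (s : Finset ι) (z : ι → F) :
    ∀ c : Finset ι → F, c s ≠ 0 →
      (Fintype.card F - 1) ^ #s ≤ #{y ∈ coordSlice s z | multilinearOn s c y ≠ 0} := by
  induction s using Finset.induction_on with
  | empty =>
    intro c hc
    simpa [multilinearOn, hc] using ⟨z, mem_coordSlice.mpr fun _ _ ↦ rfl⟩
  | @insert a s ha ih =>
    intro c hc
    set A := multilinearOn s fun J ↦ c (insert a J)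
    set B := multilinearOn s c
    set G := {y ∈ coordSlice s z | A y ≠ 0}
    have hG : (Fintype.card F - 1) ^ #s ≤ #G := ih _ hc
    have hmaps : Set.MapsTo (fun p : Σ _ : ι → F, F ↦ Function.update p.1 a p.2)
        (G.sigma fun y ↦ {t | t * A y + B y ≠ 0})
        ({y ∈ coordSlice (insert a s) z | multilinearOn (insert a s) c y ≠ 0} : Finset _) := by
      rintro ⟨y, t⟩ hyt
      simp only [coe_sigma, Set.mem_sigma_iff, G, mem_coe, mem_filter] at hyt
      refine mem_filter.mpr ⟨update_mem_coordSlice_insert hyt.1.1 a t, ?_⟩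
      dsimp only
      rw [multilinearOn_insert ha, multilinearOn_update_of_notMem ha,
        multilinearOn_update_of_notMem ha, Function.update_self]
      exact hyt.2.2
    have hinj : Set.InjOn (fun p : Σ _ : ι → F, F ↦ Function.update p.1 a p.2)
        (G.sigma fun y ↦ {t | t * A y + B y ≠ 0}) := by
      rintro ⟨y₁, t₁⟩ h₁ ⟨y₂, t₂⟩ h₂ h
      simp only [coe_sigma, Set.mem_sigma_iff, mem_coe, G, mem_filter] at h₁ h₂
      obtain ⟨rfl, rfl⟩ := eq_and_eq_of_update_eq_of_mem_coordSlice ha h₁.1.1 h₂.1.1 h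
      rfl
    calc (Fintype.card F - 1) ^ #(insert a s)
        ≤ #G * (Fintype.card F - 1) := by
          rw [card_insert_of_notMem ha, pow_succ]
          gcongr
      _ = #(G.sigma fun y ↦ {t | t * A y + B y ≠ 0}) := by
          rw [card_sigma, sum_const_nat fun y hy ↦ card_filter_mul_add_ne_zero (mem_filter.mp hy).2 _]
      _ ≤ _ := card_le_card_of_injOn _ hmaps hinj

theorem pow_mul_pow_le_card_ne_zero {S : Finset (Finset ι)} (δ : Finset ι → F) {s : Finset ι}
    (hs : s ∈ S) (hmax : ∀ K ∈ S, s ⊆ K → K = s) (hδ : δ s ≠ 0) :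
    Fintype.card F ^ (Fintype.card ι - #s) * (Fintype.card F - 1) ^ #s ≤
      #{y : ι → F | ∑ K ∈ S, δ K * ∏ i ∈ K, y i ≠ 0} := by
  -- one base point per slice `coordSlice s z`: the points vanishing on `s`
  set R := Fintype.piFinset fun i ↦ if i ∈ s then ({0} : Finset F) else univ
  set N := fun z ↦ {y ∈ coordSlice s z | multilinearOn s (restrictCoeff S δ s z) y ≠ 0}
  have hdisj : (R : Set (ι → F)).PairwiseDisjoint N := by
    intro z₁ hz₁ z₂ hz₂ hne
    refine disjoint_left.mpr fun y hy₁ hy₂ ↦ hne (funext fun i ↦ ?_)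
    simp only [mem_coe, Fintype.mem_piFinset, R] at hz₁ hz₂
    simp only [N, mem_filter, mem_coordSlice] at hy₁ hy₂
    by_cases hi : i ∈ s
    · have h₁ := hz₁ i
      have h₂ := hz₂ i
      simp only [hi, if_true, mem_singleton] at h₁ h₂
      rw [h₁, h₂]
    · rw [← hy₁.1 i hi, ← hy₂.1 i hi]
  calc Fintype.card F ^ (Fintype.card ι - #s) * (Fintype.card F - 1) ^ #s
      = ∑ _z ∈ R, (Fintype.card F - 1) ^ #s := by
        rw [sum_const, card_piFinset_ite_singleton_univ, smul_eq_mul]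
    _ ≤ ∑ z ∈ R, #(N z) := sum_le_sum fun z _ ↦
        pow_card_sub_one_le_card_coordSlice_ne_zero s z _ (by rwa [restrictCoeff_self δ hs hmax])
    _ = #(R.biUnion N) := (card_biUnion hdisj).symm
    _ ≤ _ := card_le_card <| biUnion_subset.mpr fun z _ y hy ↦ by
        simp only [N, mem_filter, mem_coordSlice] at hy
        simpa [sum_prod_eq_multilinearOn_restrictCoeff S δ s hy.1] using hy.2

theorem card_sum_prod_eq_zero_le {S : Finset (Finset ι)} (δ : Finset ι → F) {s : Finset ι}
    (hs : s ∈ S) (hmax : ∀ K ∈ S, s ⊆ K → K = s) (hδ : δ s ≠ 0) :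
    #{y : ι → F | ∑ K ∈ S, δ K * ∏ i ∈ K, y i = 0} ≤
      Fintype.card F ^ (Fintype.card ι - #s) * (Fintype.card F ^ #s - (Fintype.card F - 1) ^ #s) := by
  have htotal := card_filter_add_card_filter_not
    (s := (univ : Finset (ι → F))) fun y ↦ ∑ K ∈ S, δ K * ∏ i ∈ K, y i = 0
  have hsplit : Fintype.card F ^ Fintype.card ι =
      Fintype.card F ^ (Fintype.card ι - #s) * Fintype.card F ^ #s := by
    rw [← pow_add, Nat.sub_add_cancel (card_le_univ s)]
  rw [card_univ, Fintype.card_fun, hsplit] at htotal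
  have hnonzero := pow_mul_pow_le_card_ne_zero δ hs hmax hδ
  simp only [ne_eq] at hnonzero
  rw [Nat.mul_sub]
  omega

end

theorem zero_set_upper_bound_general (F : Type) [Field F] [Fintype F] [DecidableEq F]
    (q : ℕ) (hq : q = Fintype.card F)
    (m k : ℕ)
    (δ : Finset (Fin m) → F)
    (hδ : ∃ I : Finset (Fin m), I.card = k ∧ δ I ≠ 0) :
    (Finset.univ.filter (fun y : Fin m → F =>
        ∑ I ∈ Finset.univ.filter (fun I : Finset (Fin m) => I.card = k),
          δ I * ∏ i ∈ I, y i = 0)).card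
      ≤ q ^ (m - k) * (q ^ k - (q - 1) ^ k) := by
  subst hq
  obtain ⟨I, rfl, hI⟩ := hδ
  have hmax : ∀ K ∈ ({K | #K = #I} : Finset (Finset (Fin m))), I ⊆ K → K = I :=
    fun K hK hIK ↦ (eq_of_subset_of_card_le hIK (mem_filter.mp hK).2.le).symm
  simpa using card_sum_prod_eq_zero_le δ (by simp) hmax hI

/-- Upper bound on the number of zeros of a nonzero multilinear homogeneous
polynomial of degree `k ≤ m` over a finite field with `q` elements:
`#Z ≤ q^(m-k) * (q^k - (q-1)^k)`. -/
theorem zero_set_upper_bound (F : Type) [Field F] [Fintype F] [DecidableEq F]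
    (q : ℕ) (hq : q = Fintype.card F)
    (m k : ℕ) (hk : 1 ≤ k) (hkm : k ≤ m)
    (δ : Finset (Fin m) → F)
    (hδ : ∃ I : Finset (Fin m), I.card = k ∧ δ I ≠ 0) :
    (Finset.univ.filter (fun y : Fin m → F =>
        ∑ I ∈ Finset.univ.filter (fun I : Finset (Fin m) => I.card = k),
          δ I * ∏ i ∈ I, y i = 0)).card
      ≤ q ^ (m - k) * (q ^ k - (q - 1) ^ k) :=
  zero_set_upper_bound_general F q hq m k δ hδ
end

section
/- For every prime power q and integer k ≥ 1, q^{m-k}·(q^k − (q−1)^k) ≤ q^{m-k}·(q−1)^{k-1}·(2^k − 1) for all m ≥ k. Consequently, the number of zeros of a nonzero multilinear homogeneous polynomial of degree k in m variables over F_q is between q^{m-k}(q−1)^{k-1} and q^{m-k}(q−1)^{k-1}(2^k − 1). -/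
/-!
Write a multilinear polynomial as `P = x a * ∂P/∂x a + P|_(x a = 0)`, where neither part
involves `x a`. On each line parallel to the `a`-th axis through a point where
`∂P/∂x a ≠ 0`, `P` is a nonconstant affine function of `x a`, so it has exactly one zero and
`q - 1` nonzeros there. Induction on the degree then gives at least `(q-1)^d q^(n-d)`
nonzeros for a nonzero `P` of degree `≤ d`; applied to `∂P/∂x a` it gives at least
`(q-1)^(d-1) q^(n-d)` zeros of a nonconstant `P`. The upper bound on zeros is the complement
of the bound on nonzeros, combined with
`q^k - (q-1)^k = ∑_{j<k} C(k,j) (q-1)^j ≤ (q-1)^(k-1) (2^k - 1)`.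
-/

open Finset

namespace MultilinearPoly

open Function

section Algebra

variable {ι R : Type*} [CommSemiring R]

/-- `P I` is the coefficient of the monomial `∏ i ∈ I, x i`. -/
def eval [Fintype ι] (P : Finset ι → R) (y : ι → R) : R := ∑ I, P I * ∏ i ∈ I, y i

@[simp]
lemma eval_zero [Fintype ι] (y : ι → R) : eval (0 : Finset ι → R) y = 0 := by
  simp [eval]

def DegreeLE (P : Finset ι → R) (d : ℕ) : Prop := ∀ I, P I ≠ 0 → #I ≤ d

lemma eval_of_forall_eq_empty [Fintype ι] {P : Finset ι → R} (hP : ∀ I, P I ≠ 0 → I = ∅)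
    (y : ι → R) : eval P y = P ∅ := by
  rw [eval, sum_eq_single ∅ (fun I _ hI => by simp [not_imp_comm.mp (hP I) hI]) (by simp)]
  simp

def homogeneousPart (P : Finset ι → R) (k : ℕ) (I : Finset ι) : R := if #I = k then P I else 0

lemma degreeLE_homogeneousPart (P : Finset ι → R) (k : ℕ) : DegreeLE (homogeneousPart P k) k :=
  fun I hI => by
    by_contra h
    exact hI (if_neg (by omega))

lemma eval_homogeneousPart [Fintype ι] (P : Finset ι → R) (k : ℕ) (y : ι → R) :
    eval (homogeneousPart P k) y = ∑ I ∈ univ.filter (fun I : Finset ι => #I = k),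
      P I * ∏ i ∈ I, y i := by
  rw [sum_filter]
  simp only [eval, homogeneousPart, ite_mul, zero_mul]

variable [DecidableEq ι]

def pderiv (a : ι) (P : Finset ι → R) (I : Finset ι) : R :=
  if a ∈ I then 0 else P (insert a I)

def eraseVar (a : ι) (P : Finset ι → R) (I : Finset ι) : R :=
  if a ∈ I then 0 else P I

lemma pderiv_pderiv (a : ι) (P : Finset ι → R) : pderiv a (pderiv a P) = 0 := by
  ext I
  simp [pderiv]

lemma eraseVar_pderiv (a : ι) (P : Finset ι → R) : eraseVar a (pderiv a P) = pderiv a P := by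
  ext I
  by_cases h : a ∈ I <;> simp [eraseVar, pderiv, h]

lemma pderiv_ne_zero {a : ι} {P : Finset ι → R} {I : Finset ι} (hI : P I ≠ 0) (ha : a ∈ I) :
    pderiv a P ≠ 0 := fun h => by
  simpa [pderiv, insert_erase ha, hI] using congrFun h (I.erase a)

lemma DegreeLE.pderiv {P : Finset ι → R} {d : ℕ} (h : DegreeLE P (d + 1)) (a : ι) :
    DegreeLE (pderiv a P) d := by
  intro I hI
  by_cases ha : a ∈ I
  · simp [MultilinearPoly.pderiv, ha] at hI
  · have := h _ (by simpa [MultilinearPoly.pderiv, ha] using hI)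
    rw [card_insert_of_notMem ha] at this
    omega

variable [Fintype ι]

lemma sum_finset_eq_sum_powerset_erase {M : Type*} [AddCommMonoid M] (a : ι)
    (f : Finset ι → M) :
    ∑ I, f I = ∑ J ∈ (univ.erase a).powerset, (f J + f (insert a J)) := by
  rw [sum_add_distrib, ← sum_powerset_insert (notMem_erase a univ), insert_erase (mem_univ a),
    powerset_univ]

lemma eval_update (a : ι) (P : Finset ι → R) (y : ι → R) (t : R) :
    eval P (update y a t) = t * eval (pderiv a P) y + eval (eraseVar a P) y := by
  simp only [eval, sum_finset_eq_sum_powerset_erase a, mul_sum, ← sum_add_distrib]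
  refine sum_congr rfl fun J hJ => ?_
  have ha : a ∉ J := fun h => notMem_erase a univ (mem_powerset.mp hJ h)
  have hprod : ∏ i ∈ J, update y a t i = ∏ i ∈ J, y i :=
    prod_congr rfl fun i hi => update_of_ne (ne_of_mem_of_not_mem hi ha) t y
  simp only [pderiv, eraseVar, ha, mem_insert_self, if_true, if_false, insert_idem,
    prod_insert ha, update_self, hprod]
  ring

lemma eval_pderiv_update (a : ι) (P : Finset ι → R) (y : ι → R) (t : R) :
    eval (pderiv a P) (update y a t) = eval (pderiv a P) y := by
  rw [eval_update, pderiv_pderiv, eraseVar_pderiv, eval_zero, mul_zero, zero_add]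

end Algebra

section Counting

variable {F : Type*} [Field F] [Fintype F] [DecidableEq F]

lemma card_filter_mul_add_eq_zero {α : F} (β : F) (hα : α ≠ 0) :
    #{t : F | t * α + β = 0} = 1 := by
  rw [card_eq_one]
  refine ⟨-β / α, ?_⟩
  ext t
  simp only [mem_filter, mem_univ, true_and, mem_singleton]
  constructor
  · intro h
    field_simp
    linear_combination h
  · rintro rfl
    field_simp
    ring

lemma card_filter_mul_add_ne_zero {α : F} (β : F) (hα : α ≠ 0) :
    #{t : F | t * α + β ≠ 0} = Fintype.card F - 1 := by
  simp only [ne_eq]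
  rw [filter_not, card_univ_sdiff, card_filter_mul_add_eq_zero β hα]

variable {ι : Type*} [Fintype ι] [DecidableEq ι]

lemma card_filter_eq_sum_card_line {α : Type*} [Fintype α] [DecidableEq α] (a : ι) (c : α)
    (p : (ι → α) → Prop) [DecidablePred p] :
    #{y | p y} = ∑ z ∈ {z : ι → α | z a = c}, #{t | p (update z a t)} := by
  rw [card_eq_sum_card_fiberwise (f := fun y => update y a c) (t := {z | z a = c})
    (fun y _ => by simp)]
  refine sum_congr rfl fun z hz => ?_
  rw [← card_image_of_injective _ (update_injective z a)]
  congr 1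
  ext y
  simp only [mem_filter, mem_univ, true_and, mem_image] at hz ⊢
  constructor
  · rintro ⟨hy, rfl⟩
    exact ⟨y a, by simpa using hy, by simp⟩
  · rintro ⟨t, ht, rfl⟩
    exact ⟨ht, by rw [update_idem, ← hz, update_eq_self]⟩

def zeros (P : Finset ι → F) : Finset (ι → F) := {y | eval P y = 0}

def nonzeros (P : Finset ι → F) : Finset (ι → F) := {y | eval P y ≠ 0}

lemma zeros_homogeneousPart (P : Finset ι → F) (k : ℕ) :
    zeros (homogeneousPart P k) = univ.filter fun y : ι → F =>
      ∑ I ∈ univ.filter (fun I : Finset ι => #I = k), P I * ∏ i ∈ I, y i = 0 := by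
  simp only [zeros, eval_homogeneousPart]

def pderivSupport (a : ι) (P : Finset ι → F) : Finset (ι → F) :=
  {z | z a = 0 ∧ eval (pderiv a P) z ≠ 0}

lemma card_nonzeros_pderiv (a : ι) (P : Finset ι → F) :
    #(nonzeros (pderiv a P)) = Fintype.card F * #(pderivSupport a P) := by
  rw [nonzeros, card_filter_eq_sum_card_line a 0]
  simp only [eval_pderiv_update, filter_const, apply_ite card, card_univ, card_empty]
  rw [← sum_filter, sum_const, smul_eq_mul, mul_comm, pderivSupport, ← filter_filter]

lemma mul_card_pderivSupport_le (a : ι) (P : Finset ι → F) :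
    (Fintype.card F - 1) * #(pderivSupport a P) ≤ #(nonzeros P) := by
  rw [nonzeros, card_filter_eq_sum_card_line a 0, pderivSupport, ← filter_filter, mul_comm,
    ← smul_eq_mul]
  simp only [eval_update]
  calc _ ≤ ∑ z ∈ {z : ι → F | z a = 0} with eval (pderiv a P) z ≠ 0,
        #{t : F | t * eval (pderiv a P) z + eval (eraseVar a P) z ≠ 0} :=
        card_nsmul_le_sum _ _ _ fun z hz =>
          (card_filter_mul_add_ne_zero _ (mem_filter.mp hz).2).ge
    _ ≤ _ := sum_le_sum_of_subset (filter_subset _ _)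

lemma card_pderivSupport_le (a : ι) (P : Finset ι → F) :
    #(pderivSupport a P) ≤ #(zeros P) := by
  rw [zeros, card_filter_eq_sum_card_line a 0, pderivSupport, ← filter_filter, card_eq_sum_ones]
  simp only [eval_update]
  calc _ ≤ ∑ z ∈ {z : ι → F | z a = 0} with eval (pderiv a P) z ≠ 0,
        #{t : F | t * eval (pderiv a P) z + eval (eraseVar a P) z = 0} :=
        sum_le_sum fun z hz => (card_filter_mul_add_eq_zero _ (mem_filter.mp hz).2).ge
    _ ≤ _ := sum_le_sum_of_subset (filter_subset _ _)

lemma card_zeros_add_card_nonzeros (P : Finset ι → F) :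
    #(zeros P) + #(nonzeros P) = Fintype.card F ^ Fintype.card ι := by
  simpa [zeros, nonzeros] using card_filter_add_card_filter_not (s := univ) fun y => eval P y = 0

lemma card_nonzeros_of_forall_eq_empty {P : Finset ι → F} (hP : P ≠ 0)
    (hconst : ∀ I, P I ≠ 0 → I = ∅) :
    #(nonzeros P) = Fintype.card F ^ Fintype.card ι := by
  obtain ⟨I, hI⟩ := Function.ne_iff.mp hP
  have hP0 : P ∅ ≠ 0 := hconst I hI ▸ hI
  simp [nonzeros, eval_of_forall_eq_empty hconst, hP0]

theorem le_card_nonzeros {P : Finset ι → F} {d : ℕ} (hP : P ≠ 0) (hdeg : DegreeLE P d) :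
    (Fintype.card F - 1) ^ d * Fintype.card F ^ Fintype.card ι
      ≤ Fintype.card F ^ d * #(nonzeros P) := by
  set q := Fintype.card F
  induction d generalizing P with
  | zero =>
    have hconst (I : Finset ι) (hI : P I ≠ 0) : I = ∅ :=
      card_eq_zero.mp (Nat.le_zero.mp (hdeg I hI))
    rw [card_nonzeros_of_forall_eq_empty hP hconst]
    simp [q]
  | succ d ih =>
    by_cases hconst : ∀ I, P I ≠ 0 → I = ∅
    · rw [card_nonzeros_of_forall_eq_empty hP hconst]
      gcongr
      omega
    push Not at hconst
    obtain ⟨I, hI, a, ha⟩ := hconst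
    have hA := ih (pderiv_ne_zero hI ha) (hdeg.pderiv a)
    rw [card_nonzeros_pderiv] at hA
    calc (q - 1) ^ (d + 1) * q ^ Fintype.card ι
        = (q - 1) * ((q - 1) ^ d * q ^ Fintype.card ι) := by ring
      _ ≤ (q - 1) * (q ^ d * (q * #(pderivSupport a P))) := by gcongr
      _ = q ^ (d + 1) * ((q - 1) * #(pderivSupport a P)) := by ring
      _ ≤ q ^ (d + 1) * #(nonzeros P) := Nat.mul_le_mul_left _ (mul_card_pderivSupport_le a P)

theorem le_card_zeros {P : Finset ι → F} {d : ℕ} {I : Finset ι} (hI : P I ≠ 0)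
    (hIne : I.Nonempty) (hdeg : DegreeLE P (d + 1)) :
    (Fintype.card F - 1) ^ d * Fintype.card F ^ Fintype.card ι
      ≤ Fintype.card F ^ (d + 1) * #(zeros P) := by
  obtain ⟨a, ha⟩ := hIne
  have hA := le_card_nonzeros (pderiv_ne_zero hI ha) (hdeg.pderiv a)
  rw [card_nonzeros_pderiv] at hA
  calc _ ≤ Fintype.card F ^ d * (Fintype.card F * #(pderivSupport a P)) := hA
    _ = Fintype.card F ^ (d + 1) * #(pderivSupport a P) := by ring
    _ ≤ _ := Nat.mul_le_mul_left _ (card_pderivSupport_le a P)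

end Counting

end MultilinearPoly

lemma pow_sub_sub_one_pow_le {q : ℕ} (hq : 2 ≤ q) (k : ℕ) :
    q ^ k - (q - 1) ^ k ≤ (q - 1) ^ (k - 1) * (2 ^ k - 1) := by
  obtain ⟨a, rfl⟩ : ∃ a, q = a + 1 := ⟨q - 1, by omega⟩
  have hbinom : (a + 1) ^ k = ∑ j ∈ range k, a ^ j * k.choose j + a ^ k := by
    simp [add_pow, sum_range_succ]
  have hchoose : ∑ j ∈ range k, k.choose j = 2 ^ k - 1 := by
    have := Nat.sum_range_choose k
    rw [sum_range_succ, Nat.choose_self] at this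
    omega
  rw [Nat.add_sub_cancel, hbinom, Nat.add_sub_cancel, ← hchoose, mul_sum]
  exact sum_le_sum fun j hj =>
    Nat.mul_le_mul_right _ (Nat.pow_le_pow_right (by omega) (by simp at hj; omega))

lemma le_of_mul_pow_le_pow_mul {q n k a b : ℕ} (hq : 0 < q) (hkn : k ≤ n)
    (h : a * q ^ n ≤ q ^ k * b) : q ^ (n - k) * a ≤ b := by
  refine Nat.le_of_mul_le_mul_left ?_ (pow_pos hq k)
  calc q ^ k * (q ^ (n - k) * a) = a * q ^ n := by
        rw [← mul_assoc, ← pow_add, Nat.add_sub_cancel' hkn, mul_comm]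
    _ ≤ q ^ k * b := h

open MultilinearPoly

/-- `q^(m-k)(q^k − (q−1)^k) ≤ q^(m-k)(q−1)^(k-1)(2^k − 1)`, and consequently the
number of zeros of a nonzero multilinear homogeneous polynomial of degree `k` in
`m` variables over `F_q` lies between `q^(m-k)(q−1)^(k-1)` and
`q^(m-k)(q−1)^(k-1)(2^k − 1)`. -/
theorem zero_count_order (F : Type) [Field F] [Fintype F] [DecidableEq F]
    (q : ℕ) (hq : q = Fintype.card F)
    (m k : ℕ) (hk : 1 ≤ k) (hkm : k ≤ m)
    (δ : Finset (Fin m) → F)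
    (hδ : ∃ I : Finset (Fin m), I.card = k ∧ δ I ≠ 0) :
    q ^ (m - k) * (q ^ k - (q - 1) ^ k)
        ≤ q ^ (m - k) * (q - 1) ^ (k - 1) * (2 ^ k - 1) ∧
    q ^ (m - k) * (q - 1) ^ (k - 1)
        ≤ (Finset.univ.filter (fun y : Fin m → F =>
            ∑ I ∈ Finset.univ.filter (fun I : Finset (Fin m) => I.card = k),
              δ I * ∏ i ∈ I, y i = 0)).card ∧
    (Finset.univ.filter (fun y : Fin m → F =>
        ∑ I ∈ Finset.univ.filter (fun I : Finset (Fin m) => I.card = k),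
          δ I * ∏ i ∈ I, y i = 0)).card
      ≤ q ^ (m - k) * (q - 1) ^ (k - 1) * (2 ^ k - 1) := by
  obtain ⟨I, hIk, hδI⟩ := hδ
  obtain ⟨d, rfl⟩ : ∃ d, k = d + 1 := ⟨k - 1, by omega⟩
  rw [← zeros_homogeneousPart]
  set P := homogeneousPart δ (d + 1)
  have hPI : P I ≠ 0 := by simpa [P, homogeneousPart, hIk] using hδI
  have hq2 : 2 ≤ q := hq ▸ Fintype.one_lt_card
  have hZ : q ^ (m - (d + 1)) * (q - 1) ^ d ≤ #(zeros P) := by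
    refine le_of_mul_pow_le_pow_mul (by omega) hkm ?_
    simpa [hq] using le_card_zeros hPI (card_pos.mp (by omega)) (degreeLE_homogeneousPart δ _)
  have hNZ : q ^ (m - (d + 1)) * (q - 1) ^ (d + 1) ≤ #(nonzeros P) := by
    refine le_of_mul_pow_le_pow_mul (by omega) hkm ?_
    simpa [hq] using le_card_nonzeros (fun h => hPI (congrFun h I)) (degreeLE_homogeneousPart δ _)
  have hsum : #(zeros P) + #(nonzeros P) = q ^ m := by
    simpa [hq] using card_zeros_add_card_nonzeros P
  have hupper : q ^ (m - (d + 1)) * (q ^ (d + 1) - (q - 1) ^ (d + 1))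
      ≤ q ^ (m - (d + 1)) * (q - 1) ^ d * (2 ^ (d + 1) - 1) := by
    simpa [mul_assoc] using Nat.mul_le_mul_left _ (pow_sub_sub_one_pow_le hq2 (d + 1))
  refine ⟨hupper, by simpa using hZ, le_trans ?_ hupper⟩
  rw [Nat.mul_sub, ← pow_add, Nat.sub_add_cancel hkm]
  omega
end

section
/- Let Q be a nonzero multilinear homogeneous polynomial of degree k in m variables over F_q with zero set Z ⊆ F_q^m. Then the number of non-zeros of Q satisfies q^m − #Z ≥ q^{m-k}·(q−1)^k. -/
/-!
Write `Q = ∑_I c_I ∏_{i ∈ I} x_i` and let `I` be maximal for inclusion among the monomials with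
`c_I ≠ 0`. For `a ∈ I`, split `Q = x_a A + B` with `A, B` free of `x_a`; then `I \ {a}` is a maximal
monomial of `A`. On every line in direction `a` through a non-zero of `A`, `Q` is a non-constant
affine function of `x_a`, so it vanishes at exactly one of its `q` points. Hence the density of
non-zeros drops by at most a factor `(q - 1)/q` per variable of `I`, and is at least
`((q - 1)/q)^#I`. For homogeneous `Q` of degree `k` every monomial with `c_I ≠ 0` is maximal and
has `#I = k`.
-/

open Finset Function

section CommSemiring

variable {σ R : Type*} [CommSemiring R]

def multilinearEval [Fintype σ] (c : Finset σ → R) (y : σ → R) : R := ∑ I, c I * ∏ i ∈ I, y i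

variable [DecidableEq σ]

def pderivCoeff (a : σ) (c : Finset σ → R) (J : Finset σ) : R :=
  if a ∈ J then 0 else c (insert a J)

def evalZeroCoeff (a : σ) (c : Finset σ → R) (J : Finset σ) : R :=
  if a ∈ J then 0 else c J

lemma pderivCoeff_eq_zero_of_ssubset {a : σ} {c : Finset σ → R} {I : Finset σ}
    (hmax : ∀ J, insert a I ⊂ J → c J = 0) (J : Finset σ) (hJ : I ⊂ J) :
    pderivCoeff a c J = 0 := by
  unfold pderivCoeff
  split_ifs with haJ
  · rfl
  · refine hmax _ ((insert_subset_insert a hJ.subset).ssubset_of_ne fun h => hJ.ne ?_)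
    rw [← erase_insert (fun haI => haJ (hJ.subset haI)), h, erase_insert haJ]

variable [Fintype σ]

lemma multilinearEval_update {a : σ} {c : Finset σ → R} (hc : ∀ J, a ∈ J → c J = 0)
    (y : σ → R) (t : R) : multilinearEval c (update y a t) = multilinearEval c y := by
  refine sum_congr rfl fun J _ => ?_
  by_cases ha : a ∈ J
  · simp [hc J ha]
  · congr 1
    exact prod_congr rfl fun i hi => update_of_ne (ne_of_mem_of_not_mem hi ha) t y

lemma multilinearEval_eq_mul_add (a : σ) (c : Finset σ → R) (y : σ → R) :
    multilinearEval c y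
      = y a * multilinearEval (pderivCoeff a c) y + multilinearEval (evalZeroCoeff a c) y := by
  have hmem : ∑ J with a ∈ J, c J * ∏ i ∈ J, y i
      = ∑ J with a ∉ J, y a * (c (insert a J) * ∏ i ∈ J, y i) := by
    refine sum_nbij' (erase · a) (insert a) (by simp) (by simp) (by simp +contextual)
      (by simp) fun J hJ => ?_
    rw [mem_filter] at hJ
    rw [insert_erase hJ.2, ← mul_prod_erase J y hJ.2]
    ring
  simp only [multilinearEval, pderivCoeff, evalZeroCoeff, mul_sum, ite_mul, zero_mul,
    sum_ite, sum_const_zero, zero_add]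
  rw [← sum_filter_add_sum_filter_not univ (a ∈ ·), hmem]

end CommSemiring

section FiniteField

variable {σ F : Type*} [Fintype σ] [DecidableEq σ] [Field F] [Fintype F] [DecidableEq F]

lemma card_nonzero_mul_sub_one_le {P A B : (σ → F) → F} (a : σ) (hP : ∀ y, P y = y a * A y + B y)
    (hA : ∀ y t, A (update y a t) = A y) (hB : ∀ y t, B (update y a t) = B y) :
    #{y | A y ≠ 0} * (Fintype.card F - 1) ≤ #{y | P y ≠ 0} * Fintype.card F := by
  -- `solve (y, s)` is the point of the line through `y` in direction `a` where `P = s`, tagged with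
  -- `y a`; from it both `y` and `s` can be read off.
  let solve (p : (σ → F) × F) : (σ → F) × F := (update p.1 a ((p.2 - B p.1) / A p.1), p.1 a)
  have hsolve {y : σ → F} (s : F) (hy : A y ≠ 0) : P (solve (y, s)).1 = s := by
    simp only [solve, hP, update_self, hA, hB, div_mul_cancel₀ _ hy, sub_add_cancel]
  have hrecover (y : σ → F) (s : F) : update (solve (y, s)).1 a (solve (y, s)).2 = y := by
    simp [solve]
  calc #{y | A y ≠ 0} * (Fintype.card F - 1)
        = #(({y | A y ≠ 0} : Finset (σ → F)) ×ˢ ({s | s ≠ 0} : Finset F)) := by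
        rw [card_product, filter_ne', card_erase_of_mem (mem_univ _), card_univ]
    _ ≤ #(({y | P y ≠ 0} : Finset (σ → F)) ×ˢ (univ : Finset F)) := by
        refine card_le_card_of_injOn solve ?_ ?_
        · rintro ⟨y, s⟩ hys
          simp only [mem_coe, mem_product, mem_filter, mem_univ, true_and, and_true] at hys ⊢
          rw [hsolve s hys.1]
          exact hys.2
        · rintro ⟨y, s⟩ hys ⟨y', s'⟩ hys' h
          simp only [mem_coe, mem_product, mem_filter, mem_univ, true_and] at hys hys'
          have hy : y = y' := by rw [← hrecover y s, ← hrecover y' s', h]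
          have hs : s = s' := by rw [← hsolve s hys.1, ← hsolve s' hys'.1, h]
          rw [hy, hs]
    _ = _ := by rw [card_product, card_univ]

theorem multilinearEval_density_ge {c : Finset σ → F} {I : Finset σ} (hI : c I ≠ 0)
    (hmax : ∀ J, I ⊂ J → c J = 0) :
    (Fintype.card F - 1) ^ #I * Fintype.card F ^ Fintype.card σ
      ≤ Fintype.card F ^ #I * #{y | multilinearEval c y ≠ 0} := by
  induction I using Finset.induction_on generalizing c with
  | empty =>
    have hconst (y : σ → F) : multilinearEval c y = c ∅ := by
      rw [multilinearEval, sum_eq_single ∅ fun J _ hJ => ?_, prod_empty, mul_one]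
      · simp
      · rw [hmax J (nonempty_iff_ne_empty.2 hJ).empty_ssubset, zero_mul]
    simp [hconst, hI]
  | insert a I ha ih =>
    have hderiv : pderivCoeff a c I ≠ 0 := by simpa [pderivCoeff, ha] using hI
    have hstep := card_nonzero_mul_sub_one_le a (multilinearEval_eq_mul_add a c)
      (multilinearEval_update (by simp +contextual [pderivCoeff]))
      (multilinearEval_update (by simp +contextual [evalZeroCoeff]))
    set q := Fintype.card F
    rw [card_insert_of_notMem ha, pow_succ, pow_succ]
    calc (q - 1) ^ #I * (q - 1) * q ^ Fintype.card σ
        = (q - 1) ^ #I * q ^ Fintype.card σ * (q - 1) := by ring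
      _ ≤ q ^ #I * #{y | multilinearEval (pderivCoeff a c) y ≠ 0} * (q - 1) :=
          Nat.mul_le_mul_right _ (ih hderiv (pderivCoeff_eq_zero_of_ssubset hmax))
      _ ≤ q ^ #I * (#{y | multilinearEval c y ≠ 0} * q) := by
          rw [mul_assoc]
          gcongr
      _ = q ^ #I * q * #{y | multilinearEval c y ≠ 0} := by ring

theorem card_nonzero_multilinearEval_ge {c : Finset σ → F} {I : Finset σ} (hI : c I ≠ 0)
    (hmax : ∀ J, I ⊂ J → c J = 0) :
    Fintype.card F ^ (Fintype.card σ - #I) * (Fintype.card F - 1) ^ #I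
      ≤ #{y | multilinearEval c y ≠ 0} := by
  refine Nat.le_of_mul_le_mul_left ?_ (pow_pos (Fintype.card_pos (α := F)) #I)
  calc Fintype.card F ^ #I * (Fintype.card F ^ (Fintype.card σ - #I) * (Fintype.card F - 1) ^ #I)
      = (Fintype.card F - 1) ^ #I * Fintype.card F ^ Fintype.card σ := by
        rw [← mul_assoc, pow_mul_pow_sub _ (card_le_univ I), mul_comm]
    _ ≤ _ := multilinearEval_density_ge hI hmax

end FiniteField

theorem nonzero_count_lower_general (F : Type) [Field F] [Fintype F] [DecidableEq F]
    (q : ℕ) (hq : q = Fintype.card F)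
    (m k : ℕ)
    (δ : Finset (Fin m) → F)
    (hδ : ∃ I : Finset (Fin m), I.card = k ∧ δ I ≠ 0) :
    q ^ (m - k) * (q - 1) ^ k
      ≤ q ^ m - (Finset.univ.filter (fun y : Fin m → F =>
          ∑ I ∈ Finset.univ.filter (fun I : Finset (Fin m) => I.card = k),
            δ I * ∏ i ∈ I, y i = 0)).card := by
  subst hq
  obtain ⟨I, hIk, hI⟩ := hδ
  let c (J : Finset (Fin m)) : F := if #J = k then δ J else 0
  have heval (y : Fin m → F) :
      ∑ J ∈ univ.filter (fun J : Finset (Fin m) => J.card = k), δ J * ∏ i ∈ J, y i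
        = multilinearEval c y := by
    simp only [sum_filter, multilinearEval, c, ite_mul, zero_mul]
  have hmax (J : Finset (Fin m)) (hJ : I ⊂ J) : c J = 0 :=
    if_neg (hIk ▸ (card_lt_card hJ).ne')
  have hbound := card_nonzero_multilinearEval_ge (c := c) (by simpa [c, hIk] using hI) hmax
  have hsplit := card_filter_add_card_filter_not (s := univ) (multilinearEval c · = 0)
  rw [hIk, Fintype.card_fin] at hbound
  rw [card_univ, Fintype.card_fun, Fintype.card_fin] at hsplit
  simp only [heval]
  rw [← hsplit, Nat.add_sub_cancel_left]
  exact hbound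

/-- The number of non-zeros of a nonzero multilinear homogeneous polynomial of
degree `k ≤ m` over `F_q` satisfies `q^m − #Z ≥ q^(m−k)·(q−1)^k`. -/
theorem nonzero_count_lower (F : Type) [Field F] [Fintype F] [DecidableEq F]
    (q : ℕ) (hq : q = Fintype.card F)
    (m k : ℕ) (hk : 1 ≤ k) (hkm : k ≤ m)
    (δ : Finset (Fin m) → F)
    (hδ : ∃ I : Finset (Fin m), I.card = k ∧ δ I ≠ 0) :
    q ^ (m - k) * (q - 1) ^ k
      ≤ q ^ m - (Finset.univ.filter (fun y : Fin m → F =>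
          ∑ I ∈ Finset.univ.filter (fun I : Finset (Fin m) => I.card = k),
            δ I * ∏ i ∈ I, y i = 0)).card :=
  nonzero_count_lower_general F q hq m k δ hδ
end
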